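/- arXiv:1210.7559 — 5 statements merged into one kernel-verified Lean document; each statement's English description precedes it below -/
import Mathlib

section
/- Let d ≥ k ≥ 1, σ > 0, w_1, …, w_k > 0 with Σ_{i=1}^k w_i = 1, and μ_1, …, μ_k ∈ ℝ^d. On a probability space, let h be a random variable with values in [k] with P[h = i] = w_i, and let z = (z_1, …, z_d) be a random vector whose coordinates z_1, …, z_d are i.i.d. centered real Gaussian random variables of variance σ², with z independent of h. Set x := μ_h + z. Then: (1) σ² is the smallest eigenvalue of the covariance matrix E[x xᵀ] − E[x] E[x]ᵀ; (2) E[x xᵀ] − σ² I_d = Σ_{i=1}^k w_i μ_i μ_iᵀ; (3) for all a, b, c ∈ [d], E[x_a x_b x_c] − σ²·(E[x]_a·1{b=c} + E[x]_b·1{a=c} + E[x]_c·1{a=b}) = Σ_{i=1}^k w_i (μ_i)_a (μ_i)_b (μ_i)_c, i.e. E[x ⊗ x ⊗ x] − σ² Σ_{i=1}^d (E[x] ⊗ e_i ⊗ e_i + e_i ⊗ E[x] ⊗ e_i + e_i ⊗ e_i ⊗ E[x]) = Σ_{i=1}^k w_i μ_i ⊗ μ_i ⊗ μ_i. -/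
/-!
Given the component `i`, `x` is `μ_i + z`, and the moments of `μ_i + z` up to order three follow
from `E z = 0`, `E[z zᵀ] = σ² I` and `E[z_a z_b z_c] = 0`, the last because `z` and `-z` have the
same law. Averaging over `i` gives the second and third moment identities. The covariance of `x`
is then `σ² I + ∑ i, w i (μ_i - μ̄)(μ_i - μ̄)ᵀ` with `μ̄ = ∑ i, w i μ_i`. The second summand is
positive semidefinite, and singular because the `k ≤ d` vectors `μ_i - μ̄` satisfy the nontrivial
relation `∑ i, w i (μ_i - μ̄) = 0`; hence the least eigenvalue is `σ²`.
-/

open scoped BigOperators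
open MeasureTheory ProbabilityTheory
open scoped NNReal ENNReal

section LinearAlgebra

open Matrix

variable {ι n : Type*} [Fintype ι] [Fintype n]

theorem sum_mul_sub_mul_sub_eq {R : Type*} [CommRing R] {w : ι → R} (hw : ∑ i, w i = 1)
    (f g : ι → R) :
    ∑ i, w i * ((f i - ∑ j, w j * f j) * (g i - ∑ j, w j * g j))
      = ∑ i, w i * (f i * g i) - (∑ i, w i * f i) * ∑ i, w i * g i := by
  set F := ∑ j, w j * f j
  set G := ∑ j, w j * g j
  have h : ∀ i, w i * ((f i - F) * (g i - G))
      = w i * (f i * g i) - w i * f i * G - w i * g i * F + F * G * w i := fun i => by ring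
  simp only [h, Finset.sum_add_distrib, Finset.sum_sub_distrib, ← Finset.sum_mul,
    ← Finset.mul_sum, hw]
  ring

theorem exists_ne_zero_forall_dotProduct_eq_zero {K : Type*} [Field K] {v : ι → n → K}
    (hcard : Fintype.card ι ≤ Fintype.card n) (hv : ¬LinearIndependent K v) :
    ∃ u ≠ 0, ∀ i, v i ⬝ᵥ u = 0 := by
  have hrank : (Matrix.of v).rank < Fintype.card n := by
    have hne := linearIndependent_iff_card_eq_finrank_span.not.mp hv
    rw [rank_eq_finrank_span_row]
    exact ((finrank_range_le_card v).lt_of_ne (Ne.symm hne)).trans_le hcard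
  have hker : LinearMap.ker (Matrix.of v).mulVecLin ≠ ⊥ := fun hbot => by
    have := LinearMap.finrank_range_of_inj (LinearMap.ker_eq_bot.mp hbot)
    rw [Module.finrank_fintype_fun_eq_card] at this
    exact hrank.ne this
  obtain ⟨u, hu, hu0⟩ := Submodule.exists_mem_ne_zero_of_ne_bot hker
  exact ⟨u, hu0, fun i => congrFun (LinearMap.mem_ker.mp hu) i⟩

theorem isLeast_eigenvalues_smul_one_add [DecidableEq n] {B : Matrix n n ℝ} (hB : B.PosSemidef)
    (hsing : ∃ u ≠ 0, B *ᵥ u = 0) (s : ℝ) :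
    IsLeast {t : ℝ | ∃ u : n → ℝ, u ≠ 0 ∧ (s • 1 + B) *ᵥ u = t • u} s := by
  refine ⟨?_, ?_⟩
  · obtain ⟨u, hu, hBu⟩ := hsing
    exact ⟨u, hu, by simp [add_mulVec, smul_mulVec, hBu]⟩
  · rintro t ⟨u, hu, hut⟩
    have hquad : u ⬝ᵥ ((s • 1 + B) *ᵥ u) = s * (u ⬝ᵥ u) + u ⬝ᵥ (B *ᵥ u) := by
      simp [add_mulVec, smul_mulVec, dotProduct_add]
    have hpos : 0 < u ⬝ᵥ u := by simpa using dotProduct_self_star_pos_iff.mpr hu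
    have hBnn : 0 ≤ u ⬝ᵥ (B *ᵥ u) := by simpa using hB.dotProduct_mulVec_nonneg u
    rw [hut, dotProduct_smul, smul_eq_mul] at hquad
    nlinarith

theorem isLeast_eigenvalues_smul_one_add_sum_vecMulVec_sub_mean [DecidableEq n]
    (hcard : Fintype.card ι ≤ Fintype.card n) {w : ι → ℝ} (hw : ∀ i, 0 ≤ w i)
    (hw1 : ∑ i, w i = 1) (v : ι → n → ℝ) (s : ℝ) :
    IsLeast {t : ℝ | ∃ u : n → ℝ, u ≠ 0 ∧
      (s • 1 + ∑ i, w i • vecMulVec (v i - ∑ j, w j • v j) (v i - ∑ j, w j • v j)) *ᵥ u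
        = t • u} s := by
  set c : ι → n → ℝ := fun i => v i - ∑ j, w j • v j
  have hdep : ¬LinearIndependent ℝ c := by
    refine Fintype.not_linearIndependent_iff.mpr ⟨w, ?_, ?_⟩
    · simp [c, smul_sub, Finset.sum_sub_distrib, ← Finset.sum_smul, hw1]
    · obtain ⟨i, -, hi⟩ := Finset.exists_ne_zero_of_sum_ne_zero (hw1.trans_ne one_ne_zero)
      exact ⟨i, hi⟩
  obtain ⟨u, hu, hcu⟩ := exists_ne_zero_forall_dotProduct_eq_zero hcard hdep
  refine isLeast_eigenvalues_smul_one_add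
    (posSemidef_sum _ fun i _ => (posSemidef_vecMulVec_self_star (c i)).smul (hw i)) ⟨u, hu, ?_⟩ s
  simp [sum_mulVec, smul_mulVec, vecMulVec_mulVec, hcu]

end LinearAlgebra

section Probability

variable {Ω : Type*} [MeasurableSpace Ω] {μ : Measure Ω}

theorem MeasureTheory.MemLp.integrable_mul_mul {f g h : Ω → ℝ} (hf : MemLp f 3 μ)
    (hg : MemLp g 3 μ) (hh : MemLp h 3 μ) : Integrable (fun ω => f ω * g ω * h ω) μ := by
  have hfg : MemLp (fun ω => f ω * g ω) (3⁻¹ + 3⁻¹)⁻¹ μ := hg.mul' hf (hpqr := .of 3 3)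
  have : ENNReal.HolderTriple (3⁻¹ + 3⁻¹)⁻¹ 3 1 := ⟨by
    rw [inv_inv, inv_one, ← ENNReal.mul_inv_cancel (a := 3) (by norm_num) (by norm_num)]
    ring⟩
  exact memLp_one_iff_integrable.mp (hh.mul' hfg)

theorem integral_comp_eq_sum_of_indepFun {ι E : Type*} [Fintype ι] [MeasurableSpace ι]
    [MeasurableSingletonClass ι] [MeasurableSpace E] {h : Ω → ι} {z : Ω → E}
    (hh : Measurable h) (hind : IndepFun h z μ) {F : ι → E → ℝ} (hF : ∀ i, Measurable (F i))
    (hFz : ∀ i, Integrable (fun ω => F i (z ω)) μ) :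
    ∫ ω, F (h ω) (z ω) ∂μ = ∑ i, μ.real (h ⁻¹' {i}) * ∫ ω, F i (z ω) ∂μ := by
  classical
  have he : ∀ i, (fun ω => if h ω = i then (1 : ℝ) else 0) = (h ⁻¹' {i}).indicator 1 :=
    fun i => funext fun ω => by simp [Set.indicator_apply]
  have hterm : ∀ i, Integrable (fun ω => (if h ω = i then (1 : ℝ) else 0) * F i (z ω)) μ :=
    fun i => ((hFz i).indicator (hh (measurableSet_singleton i))).congr
      (.of_forall fun ω => by simp [Set.indicator_apply])
  calc ∫ ω, F (h ω) (z ω) ∂μ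
      = ∫ ω, ∑ i, (if h ω = i then (1 : ℝ) else 0) * F i (z ω) ∂μ := by simp [ite_mul]
    _ = ∑ i, ∫ ω, (if h ω = i then (1 : ℝ) else 0) * F i (z ω) ∂μ :=
        integral_finsetSum _ fun i _ => hterm i
    _ = ∑ i, μ.real (h ⁻¹' {i}) * ∫ ω, F i (z ω) ∂μ := by
        refine Finset.sum_congr rfl fun i _ => ?_
        have hφ : Measurable fun j : ι => if j = i then (1 : ℝ) else 0 := measurable_of_countable _
        refine ((hind.comp hφ (hF i)).integral_fun_mul_eq_mul_integral
          (hφ.comp hh).aestronglyMeasurable (hFz i).aestronglyMeasurable).trans ?_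
        simp only [Function.comp_def, he, integral_indicator_one (hh (measurableSet_singleton i))]

theorem identDistrib_neg_of_iIndepFun {ι E : Type*} [Fintype ι] [MeasurableSpace E] [Neg E]
    [MeasurableNeg E] [IsProbabilityMeasure μ] {z : Ω → ι → E}
    (hzm : ∀ i, AEMeasurable (fun ω => z ω i) μ) (hz : iIndepFun (fun i ω => z ω i) μ)
    (hsymm : ∀ i, IdentDistrib (fun ω => z ω i) (fun ω => -z ω i) μ μ) :
    IdentDistrib z (-z) μ μ where
  aemeasurable_fst := aemeasurable_pi_iff.mpr hzm
  aemeasurable_snd := (aemeasurable_pi_iff.mpr hzm).neg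
  map_eq := by
    have hneg : iIndepFun (fun i ω => -z ω i) μ :=
      hz.comp (fun _ => Neg.neg) fun _ => measurable_neg
    have hz_law := (iIndepFun_iff_map_fun_eq_pi_map hzm).mp hz
    have hneg_law := (iIndepFun_iff_map_fun_eq_pi_map fun i => (hzm i).neg).mp hneg
    simp_rw [(hsymm _).map_eq] at hz_law
    exact hz_law.trans hneg_law.symm

theorem integral_comp_eq_zero_of_identDistrib_neg {E : Type*} [MeasurableSpace E] [Neg E]
    {X : Ω → E} (hX : IdentDistrib X (-X) μ μ) {F : E → ℝ} (hF : Measurable F)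
    (hodd : ∀ y, F (-y) = -F y) : ∫ ω, F (X ω) ∂μ = 0 := by
  have := (hX.comp hF).integral_eq
  simp only [Function.comp_def, Pi.neg_apply, hodd, integral_neg] at this
  linarith

namespace ProbabilityTheory.HasLaw

variable {X : Ω → ℝ} {v : ℝ≥0}

theorem memLp_of_gaussianReal {m : ℝ} (hX : HasLaw X (gaussianReal m v) μ) {p : ℝ≥0∞}
    (hp : p ≠ ∞) : MemLp X p μ :=
  (memLp_map_measure_iff aestronglyMeasurable_id hX.aemeasurable).mp
    (hX.map_eq ▸ memLp_id_gaussianReal' p hp)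

theorem integral_eq_zero_of_gaussianReal (hX : HasLaw X (gaussianReal 0 v) μ) :
    ∫ ω, X ω ∂μ = 0 := by
  rw [hX.integral_eq, integral_id_gaussianReal]

theorem integral_mul_self_of_gaussianReal (hX : HasLaw X (gaussianReal 0 v) μ) :
    ∫ ω, X ω * X ω ∂μ = v := by
  rw [← variance_id_gaussianReal, ← hX.variance_eq,
    variance_of_integral_eq_zero hX.aemeasurable hX.integral_eq_zero_of_gaussianReal]
  simp only [sq]

theorem identDistrib_neg_of_gaussianReal (hX : HasLaw X (gaussianReal 0 v) μ) :
    IdentDistrib X (-X) μ μ where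
  aemeasurable_fst := hX.aemeasurable
  aemeasurable_snd := hX.aemeasurable.neg
  map_eq := by rw [hX.map_eq, (gaussianReal_neg hX).map_eq, neg_zero]

end ProbabilityTheory.HasLaw

structure IsIsotropicGaussian {ι : Type*} (z : Ω → ι → ℝ) (v : ℝ≥0) (μ : Measure Ω) : Prop where
  iIndepFun_coord : iIndepFun (fun i ω => z ω i) μ
  hasLaw_coord : ∀ i, HasLaw (fun ω => z ω i) (gaussianReal 0 v) μ

namespace IsIsotropicGaussian

variable {ι : Type*} {z : Ω → ι → ℝ} {v : ℝ≥0} (hz : IsIsotropicGaussian z v μ)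
include hz

theorem memLp_coord (i : ι) {p : ℝ≥0∞} (hp : p ≠ ∞) : MemLp (fun ω => z ω i) p μ :=
  (hz.hasLaw_coord i).memLp_of_gaussianReal hp

theorem integrable_coord (i : ι) : Integrable (fun ω => z ω i) μ :=
  memLp_one_iff_integrable.mp (hz.memLp_coord i ENNReal.one_ne_top)

theorem integrable_coord_mul_coord (i j : ι) : Integrable (fun ω => z ω i * z ω j) μ :=
  (hz.memLp_coord i (p := 2) (by simp)).integrable_mul (hz.memLp_coord j (p := 2) (by simp))

theorem integrable_coord_mul_coord_mul_coord (i j l : ι) :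
    Integrable (fun ω => z ω i * z ω j * z ω l) μ :=
  (hz.memLp_coord i (by simp)).integrable_mul_mul (hz.memLp_coord j (by simp))
    (hz.memLp_coord l (by simp))

theorem integral_coord (i : ι) : ∫ ω, z ω i ∂μ = 0 :=
  (hz.hasLaw_coord i).integral_eq_zero_of_gaussianReal

theorem integral_coord_mul_coord [DecidableEq ι] (i j : ι) :
    ∫ ω, z ω i * z ω j ∂μ = if i = j then (v : ℝ) else 0 := by
  split_ifs with hij
  · subst hij
    exact (hz.hasLaw_coord i).integral_mul_self_of_gaussianReal
  · rw [(hz.iIndepFun_coord.indepFun hij).integral_fun_mul_eq_mul_integral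
      (hz.hasLaw_coord i).aemeasurable.aestronglyMeasurable
      (hz.hasLaw_coord j).aemeasurable.aestronglyMeasurable, hz.integral_coord, zero_mul]

theorem identDistrib_neg [Fintype ι] [IsProbabilityMeasure μ] : IdentDistrib z (-z) μ μ :=
  identDistrib_neg_of_iIndepFun (fun i => (hz.hasLaw_coord i).aemeasurable) hz.iIndepFun_coord
    fun i => (hz.hasLaw_coord i).identDistrib_neg_of_gaussianReal

theorem integral_coord_mul_coord_mul_coord [Fintype ι] [IsProbabilityMeasure μ] (i j l : ι) :
    ∫ ω, z ω i * z ω j * z ω l ∂μ = 0 :=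
  integral_comp_eq_zero_of_identDistrib_neg hz.identDistrib_neg (F := fun y => y i * y j * y l)
    (by fun_prop) fun y => by simp only [Pi.neg_apply]; ring

variable [IsProbabilityMeasure μ] (m : ι → ℝ)

theorem memLp_const_add_coord (i : ι) {p : ℝ≥0∞} (hp : p ≠ ∞) :
    MemLp (fun ω => m i + z ω i) p μ :=
  (memLp_const (m i)).add (hz.memLp_coord i hp)

theorem integral_const_add_coord (i : ι) : ∫ ω, (m i + z ω i) ∂μ = m i := by
  have := hz.integrable_coord
  simp (disch := fun_prop) only [integral_add, integral_const, probReal_univ, smul_eq_mul,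
    hz.integral_coord]
  ring

theorem integral_const_add_coord_mul [DecidableEq ι] (i j : ι) :
    ∫ ω, (m i + z ω i) * (m j + z ω j) ∂μ = m i * m j + v * if i = j then 1 else 0 := by
  have := hz.integrable_coord
  have := hz.integrable_coord_mul_coord
  have e : ∀ ω, (m i + z ω i) * (m j + z ω j)
      = m i * m j + m i * z ω j + m j * z ω i + z ω i * z ω j := fun ω => by ring
  simp_rw [e]
  simp (disch := fun_prop) only [integral_add, integral_const_mul, integral_const, probReal_univ,
    smul_eq_mul, hz.integral_coord, hz.integral_coord_mul_coord]
  split_ifs <;> ring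

theorem integral_const_add_coord_mul_mul [Fintype ι] [DecidableEq ι] (i j l : ι) :
    ∫ ω, (m i + z ω i) * (m j + z ω j) * (m l + z ω l) ∂μ
      = m i * m j * m l + v * (m i * (if j = l then 1 else 0) + m j * (if i = l then 1 else 0)
        + m l * (if i = j then 1 else 0)) := by
  have := hz.integrable_coord
  have := hz.integrable_coord_mul_coord
  have := hz.integrable_coord_mul_coord_mul_coord
  have e : ∀ ω, (m i + z ω i) * (m j + z ω j) * (m l + z ω l)
      = m i * m j * m l + m i * m j * z ω l + m i * m l * z ω j + m j * m l * z ω i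
        + m i * (z ω j * z ω l) + m j * (z ω i * z ω l) + m l * (z ω i * z ω j)
        + z ω i * z ω j * z ω l := fun ω => by ring
  simp_rw [e]
  simp (disch := fun_prop) only [integral_add, integral_const_mul, integral_const, probReal_univ,
    smul_eq_mul, hz.integral_coord, hz.integral_coord_mul_coord,
    hz.integral_coord_mul_coord_mul_coord]
  split_ifs <;> ring

end IsIsotropicGaussian

section GaussianMixture

variable {κ ι : Type*} [Fintype κ] [MeasurableSpace κ] [MeasurableSingletonClass κ]
  {h : Ω → κ} {z x : Ω → ι → ℝ} {v : ℝ≥0} {w : κ → ℝ} {μv : κ → ι → ℝ}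
  (hh : Measurable h) (hwh : ∀ c, μ.real (h ⁻¹' {c}) = w c) (hind : IndepFun h z μ)
  (hz : IsIsotropicGaussian z v μ) (hx : ∀ ω, x ω = μv (h ω) + z ω)
include hh hwh hind hx

theorem integral_comp_gaussianMixture {G : (ι → ℝ) → ℝ} (hG : Measurable G)
    (hGi : ∀ c, Integrable (fun ω => G (μv c + z ω)) μ) :
    ∫ ω, G (x ω) ∂μ = ∑ c, w c * ∫ ω, G (μv c + z ω) ∂μ := by
  simp_rw [hx, ← hwh]
  exact integral_comp_eq_sum_of_indepFun (F := fun c y => G (μv c + y)) hh hind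
    (fun c => hG.comp (measurable_const_add _)) hGi

variable [IsProbabilityMeasure μ]
include hz

theorem integral_gaussianMixture_coord (a : ι) : ∫ ω, x ω a ∂μ = ∑ c, w c * μv c a := by
  rw [integral_comp_gaussianMixture hh hwh hind hx (G := fun y => y a) (measurable_pi_apply a)
    fun c => memLp_one_iff_integrable.mp (hz.memLp_const_add_coord (μv c) a (by simp))]
  simp only [Pi.add_apply, hz.integral_const_add_coord]

theorem integral_gaussianMixture_coord_mul [DecidableEq ι] (hw1 : ∑ c, w c = 1) (a b : ι) :
    ∫ ω, x ω a * x ω b ∂μ = ∑ c, w c * (μv c a * μv c b) + v * if a = b then 1 else 0 := by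
  rw [integral_comp_gaussianMixture hh hwh hind hx (G := fun y => y a * y b) (by fun_prop)
    fun c => (hz.memLp_const_add_coord (μv c) a (p := 2) (by simp)).integrable_mul
      (hz.memLp_const_add_coord (μv c) b (p := 2) (by simp))]
  simp only [Pi.add_apply, hz.integral_const_add_coord_mul]
  simp only [mul_add, Finset.sum_add_distrib, ← Finset.sum_mul, hw1, one_mul]

theorem integral_gaussianMixture_coord_mul_mul [Fintype ι] [DecidableEq ι] (a b d : ι) :
    ∫ ω, x ω a * x ω b * x ω d ∂μ
      = ∑ c, w c * (μv c a * μv c b * μv c d)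
        + v * ((∑ c, w c * μv c a) * (if b = d then 1 else 0)
          + (∑ c, w c * μv c b) * (if a = d then 1 else 0)
          + (∑ c, w c * μv c d) * (if a = b then 1 else 0)) := by
  rw [integral_comp_gaussianMixture hh hwh hind hx (G := fun y => y a * y b * y d) (by fun_prop)
    fun c => (hz.memLp_const_add_coord (μv c) a (by simp)).integrable_mul_mul
      (hz.memLp_const_add_coord (μv c) b (by simp)) (hz.memLp_const_add_coord (μv c) d (by simp))]
  simp only [Pi.add_apply, hz.integral_const_add_coord_mul_mul]
  simp only [Finset.sum_mul, Finset.mul_sum, ← Finset.sum_add_distrib]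
  exact Finset.sum_congr rfl fun c _ => by ring

end GaussianMixture

end Probability

theorem stmt1_general (k d : ℕ) (hkd : k ≤ d) (σ : ℝ)
    (w : Fin k → ℝ) (hw : ∀ i, 0 < w i) (hw1 : ∑ i, w i = 1)
    (μv : Fin k → Fin d → ℝ)
    {Ω : Type*} [MeasureSpace Ω] [IsProbabilityMeasure (ℙ : Measure Ω)]
    (h : Ω → Fin k) (hh : Measurable h)
    (hlaw : ∀ i, (ℙ : Measure Ω) {ω | h ω = i} = ENNReal.ofReal (w i))
    (z : Ω → Fin d → ℝ) (hzm : ∀ i, Measurable fun ω => z ω i)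
    (hziid : iIndepFun (fun i ω => z ω i) ℙ)
    (hzlaw : ∀ i, Measure.map (fun ω => z ω i) ℙ = gaussianReal 0 ⟨σ ^ 2, sq_nonneg σ⟩)
    (hindep : IndepFun h z ℙ)
    (x : Ω → Fin d → ℝ) (hx : ∀ ω, x ω = μv (h ω) + z ω) :
    IsLeast {t : ℝ | ∃ u : Fin d → ℝ, u ≠ 0 ∧
        (Matrix.of fun a b : Fin d =>
          (∫ ω, x ω a * x ω b) - (∫ ω, x ω a) * (∫ ω, x ω b)).mulVec u = t • u}
      (σ ^ 2) ∧
    (∀ a b : Fin d,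
      (∫ ω, x ω a * x ω b) - σ ^ 2 * (if a = b then 1 else 0)
        = ∑ i, w i * (μv i a * μv i b)) ∧
    (∀ a b c : Fin d,
      (∫ ω, x ω a * x ω b * x ω c)
          - σ ^ 2 * ((∫ ω, x ω a) * (if b = c then 1 else 0)
            + (∫ ω, x ω b) * (if a = c then 1 else 0)
            + (∫ ω, x ω c) * (if a = b then 1 else 0))
        = ∑ i, w i * (μv i a * μv i b * μv i c)) := by
  have hz : IsIsotropicGaussian z ⟨σ ^ 2, sq_nonneg σ⟩ ℙ :=
    ⟨hziid, fun i => ⟨(hzm i).aemeasurable, hzlaw i⟩⟩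
  have hwh : ∀ i, (ℙ : Measure Ω).real (h ⁻¹' {i}) = w i := fun i =>
    (congrArg ENNReal.toReal (hlaw i)).trans (ENNReal.toReal_ofReal (hw i).le)
  have hE1 := integral_gaussianMixture_coord hh hwh hindep hz hx
  have hE2 := integral_gaussianMixture_coord_mul hh hwh hindep hz hx hw1
  have hE3 := integral_gaussianMixture_coord_mul_mul hh hwh hindep hz hx
  have hv : NNReal.toReal ⟨σ ^ 2, sq_nonneg σ⟩ = σ ^ 2 := rfl
  simp only [hv] at hE2 hE3
  refine ⟨?_, fun a b => by rw [hE2]; exact add_sub_cancel_right _ _,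
    fun a b c => by rw [hE3, hE1, hE1, hE1]; exact add_sub_cancel_right _ _⟩
  have hcov : (Matrix.of fun a b : Fin d => (∫ ω, x ω a * x ω b) - (∫ ω, x ω a) * (∫ ω, x ω b))
      = σ ^ 2 • 1
        + ∑ i, w i • Matrix.vecMulVec (μv i - ∑ j, w j • μv j) (μv i - ∑ j, w j • μv j) := by
    ext a b
    simp only [Matrix.of_apply, hE1, hE2, Matrix.add_apply, Matrix.smul_apply, Matrix.one_apply,
      Matrix.sum_apply, Matrix.vecMulVec_apply, Pi.sub_apply, Finset.sum_apply, Pi.smul_apply,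
      smul_eq_mul, sum_mul_sub_mul_sub_eq hw1]
    ring
  rw [hcov]
  exact isLeast_eigenvalues_smul_one_add_sum_vecMulVec_sub_mean (by simpa using hkd)
    (fun i => (hw i).le) hw1 μv _

/-- **Mixture of spherical Gaussians with common covariance: moment structure.**
`x = μ_h + z` with `P[h = i] = w i` and `z` an independent Gaussian vector with i.i.d.
`N(0,σ²)` coordinates.  Then `σ²` is the smallest eigenvalue of the covariance matrix
`E[x xᵀ] - E[x] E[x]ᵀ`, and the adjusted second and third moments are
`∑ i, w i • μ i ⊗ μ i` and `∑ i, w i • μ i ⊗ μ i ⊗ μ i`. -/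
theorem stmt1 (k d : ℕ) (hk : 1 ≤ k) (hkd : k ≤ d) (σ : ℝ) (hσ : 0 < σ)
    (w : Fin k → ℝ) (hw : ∀ i, 0 < w i) (hw1 : ∑ i, w i = 1)
    (μv : Fin k → Fin d → ℝ)
    {Ω : Type*} [MeasureSpace Ω] [IsProbabilityMeasure (ℙ : Measure Ω)]
    (h : Ω → Fin k) (hh : Measurable h)
    (hlaw : ∀ i, (ℙ : Measure Ω) {ω | h ω = i} = ENNReal.ofReal (w i))
    (z : Ω → Fin d → ℝ) (hzm : ∀ i, Measurable fun ω => z ω i)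
    (hziid : iIndepFun (fun i ω => z ω i) ℙ)
    (hzlaw : ∀ i, Measure.map (fun ω => z ω i) ℙ = gaussianReal 0 ⟨σ ^ 2, sq_nonneg σ⟩)
    (hindep : IndepFun h z ℙ)
    (x : Ω → Fin d → ℝ) (hx : ∀ ω, x ω = μv (h ω) + z ω) :
    IsLeast {t : ℝ | ∃ u : Fin d → ℝ, u ≠ 0 ∧
        (Matrix.of fun a b : Fin d =>
          (∫ ω, x ω a * x ω b) - (∫ ω, x ω a) * (∫ ω, x ω b)).mulVec u = t • u}
      (σ ^ 2) ∧
    (∀ a b : Fin d,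
      (∫ ω, x ω a * x ω b) - σ ^ 2 * (if a = b then 1 else 0)
        = ∑ i, w i * (μv i a * μv i b)) ∧
    (∀ a b c : Fin d,
      (∫ ω, x ω a * x ω b * x ω c)
          - σ ^ 2 * ((∫ ω, x ω a) * (if b = c then 1 else 0)
            + (∫ ω, x ω b) * (if a = c then 1 else 0)
            + (∫ ω, x ω c) * (if a = b then 1 else 0))
        = ∑ i, w i * (μv i a * μv i b * μv i c)) :=
  stmt1_general k d hkd σ w hw hw1 μv h hh hlaw z hzm hziid hzlaw hindep x hx
end

section
/- Let (Ω, P) be a probability space, h : Ω → [k] a random variable with P[h = j] = w_j, and for t ∈ {1,2,3} let x_t : Ω → ℝ^{d_t} be bounded measurable random vectors. Assume x₁, x₂, x₃ are conditionally independent given h, in the sense that for all j ∈ [k] and all bounded measurable functions f_t : ℝ^{d_t} → ℝ (t = 1,2,3): E[f₁(x₁)f₂(x₂)f₃(x₃)·1{h=j}]·P[h=j]² = E[f₁(x₁)·1{h=j}]·E[f₂(x₂)·1{h=j}]·E[f₃(x₃)·1{h=j}]. Assume further that E[x_t·1{h=j}] = w_j·μ_{t,j} for all t and j, where μ_{t,j}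 ∈ ℝ^{d_t}. Then for all t ≠ t' in {1,2,3}, E[x_t ⊗ x_{t'}] = Σ_{i=1}^k w_i μ_{t,i} ⊗ μ_{t',i} (entrywise: E[(x_t)_a (x_{t'})_b] = Σ_i w_i (μ_{t,i})_a (μ_{t',i})_b), and E[x₁ ⊗ x₂ ⊗ x₃] = Σ_{i=1}^k w_i μ_{1,i} ⊗ μ_{2,i} ⊗ μ_{3,i}. -/
open scoped BigOperators
open MeasureTheory ProbabilityTheory

/-! Condition on the label: `E[Y] = ∑ⱼ E[Y·1{h=j}]`. If `w_j ≠ 0`, conditional independence gives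
`E[f₁f₂f₃·1{h=j}] = w_j⁻² ∏ₜ E[fₜ·1{h=j}] = w_j ∏ₜ mₜ` with `mₜ = E[fₜ·1{h=j}] / w_j` the
conditional mean of `fₜ`; labels of weight zero contribute nothing. A pairwise moment is a triple
one whose third test function is the constant `1`. -/

section Mixture

variable {Ω : Type*} [MeasurableSpace Ω] {μ : Measure Ω} {k : ℕ} {h : Ω → Fin k}

omit [MeasurableSpace Ω] in
lemma mul_ite_eq_indicator (g : Ω → ℝ) (j : Fin k) :
    (fun ω => g ω * if h ω = j then 1 else 0) = {ω | h ω = j}.indicator g := by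
  ext ω
  simp [Set.indicator_apply]

lemma measurableSet_label (hh : Measurable h) (j : Fin k) : MeasurableSet {ω | h ω = j} :=
  hh (measurableSet_singleton j)

lemma integral_mul_ite_eq_setIntegral (hh : Measurable h) (g : Ω → ℝ) (j : Fin k) :
    ∫ ω, g ω * (if h ω = j then 1 else 0) ∂μ = ∫ ω in {ω | h ω = j}, g ω ∂μ := by
  rw [← integral_indicator (measurableSet_label hh j), ← mul_ite_eq_indicator]

lemma integral_ite_eq_measureReal (hh : Measurable h) (j : Fin k) :
    ∫ ω, (if h ω = j then (1 : ℝ) else 0) ∂μ = μ.real {ω | h ω = j} := by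
  simpa using integral_mul_ite_eq_setIntegral (μ := μ) hh 1 j

lemma integral_mul_ite_eq_zero (hh : Measurable h) {j : Fin k} (hj : μ {ω | h ω = j} = 0)
    (g : Ω → ℝ) : ∫ ω, g ω * (if h ω = j then 1 else 0) ∂μ = 0 := by
  rw [integral_mul_ite_eq_setIntegral hh, setIntegral_measure_zero _ hj]

lemma integral_eq_sum_integral_mul_ite (hh : Measurable h) {g : Ω → ℝ} (hg : Integrable g μ) :
    ∫ ω, g ω ∂μ = ∑ j, ∫ ω, g ω * (if h ω = j then 1 else 0) ∂μ := by
  rw [← integral_finsetSum _ fun j _ => ?_]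
  · simp [mul_ite]
  · rw [mul_ite_eq_indicator]
    exact hg.indicator (measurableSet_label hh j)

theorem integral_mul_mul_eq_sum_of_factorization (hh : Measurable h) {w : Fin k → ℝ}
    (hlaw : ∀ j, μ {ω | h ω = j} = ENNReal.ofReal (w j)) {Y : Fin 3 → Ω → ℝ}
    (hY : Integrable (fun ω => Y 0 ω * Y 1 ω * Y 2 ω) μ) (m : Fin 3 → Fin k → ℝ)
    (hfac : ∀ j, (∫ ω, Y 0 ω * Y 1 ω * Y 2 ω * (if h ω = j then 1 else 0) ∂μ) * w j ^ 2
        = (∫ ω, Y 0 ω * (if h ω = j then 1 else 0) ∂μ)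
          * (∫ ω, Y 1 ω * (if h ω = j then 1 else 0) ∂μ)
          * (∫ ω, Y 2 ω * (if h ω = j then 1 else 0) ∂μ))
    (hmean : ∀ t j, ∫ ω, Y t ω * (if h ω = j then 1 else 0) ∂μ = w j * m t j) :
    ∫ ω, Y 0 ω * Y 1 ω * Y 2 ω ∂μ = ∑ j, w j * (m 0 j * m 1 j * m 2 j) := by
  rw [integral_eq_sum_integral_mul_ite hh hY]
  refine Finset.sum_congr rfl fun j _ => ?_
  rcases eq_or_ne (w j) 0 with hw | hw
  · rw [integral_mul_ite_eq_zero hh (by rw [hlaw, hw, ENNReal.ofReal_zero]), hw, zero_mul]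
  · refine mul_right_cancel₀ (pow_ne_zero 2 hw) ?_
    rw [hfac, hmean 0, hmean 1, hmean 2]
    ring

end Mixture

theorem Fintype.prod_elim_update_update {ι M : Type*} [Fintype ι] [DecidableEq ι] [CommMonoid M]
    {α : ι → Type*} (g : ∀ t, α t → M) {t t' : ι} (htt' : t ≠ t') (a : α t) (b : α t') :
    ∏ s, (Function.update (Function.update (fun _ => none) t (some a)) t' (some b) s).elim 1
      (g s) = g t a * g t' b := by
  rw [Fintype.prod_eq_mul t t' htt']
  · simp [Function.update_of_ne htt']
  · rintro s ⟨hs, hs'⟩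
    simp [Function.update_of_ne hs, Function.update_of_ne hs']

/-- The conditional-independence hypothesis only applies to bounded test functions, so the
coordinate `v i` is clipped to `[-B, B]`; `none` selects the constant `1`. -/
def clippedCoord {n : ℕ} (B : ℝ) : Option (Fin n) → (Fin n → ℝ) → ℝ
  | none, _ => 1
  | some i, v => max (-B) (min B (v i))

lemma measurable_clippedCoord {n : ℕ} (B : ℝ) (o : Option (Fin n)) :
    Measurable (clippedCoord B o) := by
  cases o with
  | none => exact measurable_const
  | some i => exact measurable_const.max (measurable_const.min (measurable_pi_apply i))

lemma abs_clippedCoord_le {n : ℕ} (B : ℝ) (o : Option (Fin n)) (v : Fin n → ℝ) :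
    |clippedCoord B o v| ≤ max |B| 1 := by
  cases o with
  | none => simp [clippedCoord]
  | some i =>
    refine (abs_le.2 ⟨?_, ?_⟩).trans (le_max_left _ _)
    · exact (neg_le_neg (le_abs_self B)).trans (le_max_left _ _)
    · exact max_le (neg_le_abs B) ((min_le_left _ _).trans (le_abs_self B))

lemma clippedCoord_eq_elim {n : ℕ} {B : ℝ} {v : Fin n → ℝ} (hv : ∀ i, |v i| ≤ B)
    (o : Option (Fin n)) : clippedCoord B o v = o.elim 1 v := by
  cases o with
  | none => rfl
  | some i =>
    obtain ⟨hlo, hhi⟩ := abs_le.1 (hv i)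
    simp [clippedCoord, min_eq_right hhi, max_eq_right hlo]

theorem integral_prod_elim_eq_sum {Ω : Type*} [MeasurableSpace Ω] {μ : Measure Ω}
    [IsFiniteMeasure μ] {k : ℕ} {d : Fin 3 → ℕ} {w : Fin k → ℝ} (hw0 : ∀ j, 0 ≤ w j)
    {h : Ω → Fin k} (hh : Measurable h) (hlaw : ∀ j, μ {ω | h ω = j} = ENNReal.ofReal (w j))
    {x : ∀ t : Fin 3, Ω → Fin (d t) → ℝ} (hmeas : ∀ t, Measurable (x t))
    (hbdd : ∀ t, ∃ C : ℝ, ∀ ω i, |x t ω i| ≤ C) {μv : ∀ t : Fin 3, Fin k → Fin (d t) → ℝ}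
    (hci : ∀ (j : Fin k) (f : ∀ t : Fin 3, (Fin (d t) → ℝ) → ℝ),
      (∀ t, Measurable (f t)) → (∀ t, ∃ C : ℝ, ∀ v, |f t v| ≤ C) →
      (∫ ω, (f 0 (x 0 ω) * f 1 (x 1 ω) * f 2 (x 2 ω)) * (if h ω = j then 1 else 0) ∂μ)
          * (w j) ^ 2
        = (∫ ω, f 0 (x 0 ω) * (if h ω = j then 1 else 0) ∂μ)
          * (∫ ω, f 1 (x 1 ω) * (if h ω = j then 1 else 0) ∂μ)
          * (∫ ω, f 2 (x 2 ω) * (if h ω = j then 1 else 0) ∂μ))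
    (hmean : ∀ (t : Fin 3) (j : Fin k) (i : Fin (d t)),
      ∫ ω, x t ω i * (if h ω = j then 1 else 0) ∂μ = w j * μv t j i)
    (sel : ∀ t : Fin 3, Option (Fin (d t))) :
    ∫ ω, ∏ t, (sel t).elim 1 (x t ω) ∂μ = ∑ j, w j * ∏ t, (sel t).elim 1 (μv t j) := by
  choose B hB using hbdd
  have hclip : ∀ t ω, clippedCoord (B t) (sel t) (x t ω) = (sel t).elim 1 (x t ω) :=
    fun t ω => clippedCoord_eq_elim (hB t ω) (sel t)
  have hsel_meas : ∀ t, Measurable fun ω => (sel t).elim 1 (x t ω) := fun t => by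
    simpa only [Function.comp_def, hclip] using
      (measurable_clippedCoord (B t) (sel t)).comp (hmeas t)
  have hsel_bdd : ∀ t ω, |(sel t).elim 1 (x t ω)| ≤ max |B t| 1 := fun t ω => by
    simpa only [hclip] using abs_clippedCoord_le (B t) (sel t) (x t ω)
  have hint : Integrable (fun ω => (sel 0).elim 1 (x 0 ω) * (sel 1).elim 1 (x 1 ω)
      * (sel 2).elim 1 (x 2 ω)) μ := by
    refine .of_bound (by fun_prop) (max |B 0| 1 * max |B 1| 1 * max |B 2| 1)
      (ae_of_all _ fun ω => ?_)
    rw [Real.norm_eq_abs, abs_mul, abs_mul]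
    gcongr <;> apply hsel_bdd
  have hsel_mean : ∀ t j, ∫ ω, (sel t).elim 1 (x t ω) * (if h ω = j then 1 else 0) ∂μ
      = w j * (sel t).elim 1 (μv t j) := fun t j => by
    obtain _ | i := sel t
    · simp [integral_ite_eq_measureReal hh, measureReal_def, hlaw, hw0]
    · exact hmean t j i
  have hfac := fun j => hci j (fun t => clippedCoord (B t) (sel t))
    (fun t => measurable_clippedCoord _ _) (fun t => ⟨_, abs_clippedCoord_le _ _⟩)
  simp only [hclip] at hfac
  simpa only [Fin.prod_univ_three] using
    integral_mul_mul_eq_sum_of_factorization hh hlaw hint _ hfac hsel_mean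

/-- **Multi-view (naïve Bayes) model: cross moment structure.**
A hidden label `h ∈ [k]` with `P[h = j] = w j`, and three bounded observed random vectors
`x₁, x₂, x₃` that are conditionally independent given `h`, with conditional means
`μ_{t,j}` (encoded via `E[x_t · 1{h=j}] = w j • μ_{t,j}`).  Then the pairwise cross moments
are `∑ i, w i • μ_{t,i} ⊗ μ_{t',i}` and the triple cross moment is
`∑ i, w i • μ_{1,i} ⊗ μ_{2,i} ⊗ μ_{3,i}`. -/
theorem stmt2 (k : ℕ) (d : Fin 3 → ℕ)
    {Ω : Type*} [MeasureSpace Ω] [IsProbabilityMeasure (ℙ : Measure Ω)]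
    (w : Fin k → ℝ) (hw0 : ∀ j, 0 ≤ w j) (h : Ω → Fin k) (hh : Measurable h)
    (hlaw : ∀ j, (ℙ : Measure Ω) {ω | h ω = j} = ENNReal.ofReal (w j))
    (x : ∀ t : Fin 3, Ω → Fin (d t) → ℝ)
    (hmeas : ∀ t, Measurable (x t))
    (hbdd : ∀ t, ∃ C : ℝ, ∀ ω i, |x t ω i| ≤ C)
    (μv : ∀ t : Fin 3, Fin k → Fin (d t) → ℝ)
    (hci : ∀ (j : Fin k) (f : ∀ t : Fin 3, (Fin (d t) → ℝ) → ℝ),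
      (∀ t, Measurable (f t)) → (∀ t, ∃ C : ℝ, ∀ v, |f t v| ≤ C) →
      (∫ ω, (f 0 (x 0 ω) * f 1 (x 1 ω) * f 2 (x 2 ω)) * (if h ω = j then 1 else 0))
          * (w j) ^ 2
        = (∫ ω, f 0 (x 0 ω) * (if h ω = j then 1 else 0))
          * (∫ ω, f 1 (x 1 ω) * (if h ω = j then 1 else 0))
          * (∫ ω, f 2 (x 2 ω) * (if h ω = j then 1 else 0)))
    (hmean : ∀ (t : Fin 3) (j : Fin k) (i : Fin (d t)),
      ∫ ω, x t ω i * (if h ω = j then 1 else 0) = w j * μv t j i) :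
    (∀ t t' : Fin 3, t ≠ t' → ∀ (a : Fin (d t)) (b : Fin (d t')),
      ∫ ω, x t ω a * x t' ω b = ∑ i, w i * (μv t i a * μv t' i b)) ∧
    (∀ (a : Fin (d 0)) (b : Fin (d 1)) (c : Fin (d 2)),
      ∫ ω, x 0 ω a * x 1 ω b * x 2 ω c
        = ∑ i, w i * (μv 0 i a * μv 1 i b * μv 2 i c)) := by
  have hmoment := integral_prod_elim_eq_sum hw0 hh hlaw hmeas hbdd hci hmean
  refine ⟨fun t t' htt' a b => ?_, fun a b c => ?_⟩
  · simpa only [Fintype.prod_elim_update_update _ htt'] using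
      hmoment (Function.update (Function.update (fun _ => none) t (some a)) t' (some b))
  · simpa [Fin.prod_univ_three] using hmoment (Function.update
      (Function.update (Function.update (fun _ => none) 0 (some a)) 1 (some b)) 2 (some c))
end

section
/- Fix k ≥ 1, weights w_1, …, w_k > 0, and for each t ∈ {1,2,3} vectors μ_{t,1}, …, μ_{t,k} ∈ ℝ^k that are linearly independent. For a, b ∈ {1,2,3} with a ≠ b define the k×k matrix P_{ab} := Σ_{i=1}^k w_i μ_{a,i} μ_{b,i}ᵀ. Then each P_{ab} is invertible; and setting C₁ := P_{32} P_{12}^{-1} and C₂ := P_{31} P_{21}^{-1}, the matrix M₂ := C₁ P_{12} C₂ᵀ and the trilinear form M₃(x, y, z) := Σ_{i=1}^k w_i ⟨C₁ μ_{1,i}, x⟩⟨C₂ μ_{2,i}, y⟩⟨μ_{3,i}, z⟩ satisfy M₂ = Σ_{i=1}^k w_i μ_{3,i} μ_{3,i}ᵀ and M₃(x, y, z) = Σ_{i=1}^k w_i ⟨μ_{3,i}, x⟩⟨μ_{3,i}, y⟩⟨μ_{3,i}, z⟩ for all x, y, z ∈ ℝ^k. -/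
open scoped BigOperators
open Matrix

/-!
Write `A_t` for the matrix with rows `μ_{t,i}` and `D = diag w`. Then `P_{ab} = A_aᵀ D A_b` with
all three factors invertible, so `P_{st} P_{ut}⁻¹ = A_sᵀ (A_uᵀ)⁻¹`, and this matrix sends
`μ_{u,i} = A_uᵀ e_i` to `μ_{s,i}`. Thus `C₁` and `C₂` carry the conditional means of the first two
views onto those of the third, which gives both identities.
-/

theorem Matrix.sum_smul_vecMulVec_eq_transpose_mul_diagonal_mul {R m n l : Type*} [CommSemiring R]
    [Fintype n] [DecidableEq n] (w : n → R) (u : n → m → R) (v : n → l → R) :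
    ∑ i, w i • vecMulVec (u i) (v i) = (of u)ᵀ * (diagonal w * of v) := by
  ext r c
  simp only [sum_apply, smul_apply, vecMulVec_apply, smul_eq_mul, mul_apply, diagonal_apply,
    transpose_apply, of_apply, ite_mul, zero_mul, Finset.sum_ite_eq, Finset.mem_univ, if_true]
  exact Finset.sum_congr rfl fun i _ => by ring

section

variable {R n : Type*} [CommRing R] [Fintype n] [DecidableEq n]

theorem Matrix.mul_mul_inv_mul_cancel_right (X Y Z : Matrix n n R) (hY : IsUnit Y.det) :
    X * Y * (Z * Y)⁻¹ = X * Z⁻¹ := by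
  rw [mul_inv_rev, ← Matrix.mul_assoc, mul_nonsing_inv_cancel_right _ _ hY]

theorem Matrix.transpose_mul_inv_transpose_mulVec_of (u v : n → n → R) (hv : IsUnit (of v))
    (i : n) :
    ((of u)ᵀ * ((of v)ᵀ)⁻¹) *ᵥ v i = u i := by
  have hcol : ∀ x : n → n → R, (of x)ᵀ *ᵥ Pi.single i 1 = x i := fun x => by
    rw [mulVec_single_one]; rfl
  rw [← hcol v, mulVec_mulVec, nonsing_inv_mul_cancel_right _ _
    (by simpa [det_transpose] using (isUnit_iff_isUnit_det _).mp hv), hcol]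

end

/-- Views `1, 2, 3` are indexed by `0, 1, 2 : Fin 3`. -/
theorem stmt3_general (k : ℕ) (w : Fin k → ℝ) (hw : ∀ i, 0 < w i)
    (μ : Fin 3 → Fin k → Fin k → ℝ)
    (hli : ∀ t, LinearIndependent ℝ (μ t))
    (P : Fin 3 → Fin 3 → Matrix (Fin k) (Fin k) ℝ)
    (hP : ∀ a b, P a b = ∑ i, w i • Matrix.vecMulVec (μ a i) (μ b i)) :
    (∀ a b : Fin 3, a ≠ b → IsUnit (P a b)) ∧
    ((P 2 1 * (P 0 1)⁻¹) * P 0 1 * (P 2 0 * (P 1 0)⁻¹)ᵀ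
        = ∑ i, w i • Matrix.vecMulVec (μ 2 i) (μ 2 i)) ∧
    (∀ x y z : Fin k → ℝ,
      ∑ i, w i * (((P 2 1 * (P 0 1)⁻¹).mulVec (μ 0 i)) ⬝ᵥ x)
            * (((P 2 0 * (P 1 0)⁻¹).mulVec (μ 1 i)) ⬝ᵥ y) * (μ 2 i ⬝ᵥ z)
        = ∑ i, w i * (μ 2 i ⬝ᵥ x) * (μ 2 i ⬝ᵥ y) * (μ 2 i ⬝ᵥ z)) := by
  set A : Fin 3 → Matrix (Fin k) (Fin k) ℝ := fun t => of (μ t)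
  have hA : ∀ t, IsUnit (A t) := fun t => linearIndependent_rows_iff_isUnit.mp (hli t)
  have hAdet : ∀ t, IsUnit (A t).det := fun t => (isUnit_iff_isUnit_det _).mp (hA t)
  have hD : IsUnit (diagonal w) := 
    isUnit_diagonal.mpr (Pi.isUnit_iff.mpr fun i => (hw i).ne'.isUnit)
  have hDA : ∀ t, IsUnit (diagonal w * A t).det := fun t =>
    (isUnit_iff_isUnit_det _).mp (hD.mul (hA t))
  have hfact : ∀ a b, P a b = (A a)ᵀ * (diagonal w * A b) := fun a b =>
    (hP a b).trans (sum_smul_vecMulVec_eq_transpose_mul_diagonal_mul _ _ _)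
  have hC : ∀ s t u, P s t * (P u t)⁻¹ = (A s)ᵀ * ((A u)ᵀ)⁻¹ := fun s t u => by
    rw [hfact, hfact, mul_mul_inv_mul_cancel_right _ _ _ (hDA t)]
  refine ⟨fun a b _ => hfact a b ▸ ((isUnit_transpose _).mpr (hA a)).mul (hD.mul (hA b)), ?_, ?_⟩
  · rw [hC, hC, hfact, sum_smul_vecMulVec_eq_transpose_mul_diagonal_mul, transpose_mul,
      transpose_nonsing_inv, transpose_transpose, transpose_transpose]
    simp only [Matrix.mul_assoc]
    rw [nonsing_inv_mul_cancel_left _ _ (by simpa using hAdet 0),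
      mul_nonsing_inv_cancel_left _ _ (hAdet 1)]
  · intro x y z
    simp only [hC, A, transpose_mul_inv_transpose_mulVec_of _ _ (hA _)]

/-- **Symmetrization of cross moments in the multi-view model.**
With pairwise cross-moment matrices `P a b = ∑ i, w i • μ_{a,i} μ_{b,i}ᵀ` (for `a ≠ b`),
each `P a b` is invertible, and with `C₁ = P₃₂ P₁₂⁻¹`, `C₂ = P₃₁ P₂₁⁻¹`, the symmetrized
moments `M₂ = C₁ P₁₂ C₂ᵀ` and `M₃(x,y,z) = ∑ i, w i ⟨C₁ μ_{1,i}, x⟩⟨C₂ μ_{2,i}, y⟩⟨μ_{3,i}, z⟩`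
equal `∑ i, w i • μ_{3,i} μ_{3,i}ᵀ` and `∑ i, w i ⟨μ_{3,i},x⟩⟨μ_{3,i},y⟩⟨μ_{3,i},z⟩`.
(Views `1,2,3` are indexed by `0,1,2 : Fin 3`.) -/
theorem stmt3 (k : ℕ) (hk : 1 ≤ k) (w : Fin k → ℝ) (hw : ∀ i, 0 < w i)
    (μ : Fin 3 → Fin k → Fin k → ℝ)
    (hli : ∀ t, LinearIndependent ℝ (μ t))
    (P : Fin 3 → Fin 3 → Matrix (Fin k) (Fin k) ℝ)
    (hP : ∀ a b, P a b = ∑ i, w i • Matrix.vecMulVec (μ a i) (μ b i)) :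
    (∀ a b : Fin 3, a ≠ b → IsUnit (P a b)) ∧
    ((P 2 1 * (P 0 1)⁻¹) * P 0 1 * (P 2 0 * (P 1 0)⁻¹)ᵀ
        = ∑ i, w i • Matrix.vecMulVec (μ 2 i) (μ 2 i)) ∧
    (∀ x y z : Fin k → ℝ,
      ∑ i, w i * (((P 2 1 * (P 0 1)⁻¹).mulVec (μ 0 i)) ⬝ᵥ x)
            * (((P 2 0 * (P 1 0)⁻¹).mulVec (μ 1 i)) ⬝ᵥ y) * (μ 2 i ⬝ᵥ z)
        = ∑ i, w i * (μ 2 i ⬝ᵥ x) * (μ 2 i ⬝ᵥ y) * (μ 2 i ⬝ᵥ z)) :=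
  stmt3_general k w hw μ hli P hP
end

section
/- Let k, d ≥ 1, let π ∈ ℝ^k be a probability vector, T ∈ ℝ^{k×k} a column-stochastic matrix (T_{i,j} ≥ 0, Σ_i T_{i,j} = 1), and O ∈ ℝ^{d×k}. On a probability space let y₁, y₂, y₃ : Ω → [k] have joint law P[(y₁,y₂,y₃) = (a,b,c)] = T_{c,b}·T_{b,a}·π_a, and let x₁, x₂, x₃ : Ω → ℝ^d be integrable random vectors such that for all (a,b,c) ∈ [k]³ and t ∈ {1,2,3}: E[x_t·1{(y₁,y₂,y₃)=(a,b,c)}] = P[(y₁,y₂,y₃)=(a,b,c)]·O e_{u_t}, where (u₁,u₂,u₃) := (a,b,c). Set w := Tπ and assume w_j > 0 for all j. Then for all j ∈ [k]: E[x₁·1{y₂=j}] = w_j·O diag(π) Tᵀ diag(w)^{-1} e_j; E[x₂·1{y₂=j}] = w_j·O e_j; and E[x₃·1{y₂=j}] = w_j·O T e_j. Equivalently, E[x₁ | y₂=j] = O diag(π) Tᵀ diag(w)^{-1} e_j, E[x₂ | y₂=j] = O e_j, and E[x₃ | y₂=j] = O T e_j. -/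
/-!
Split `{y₂ = j}` along the values `(a, c)` of `y₁` and `y₃`: by hypothesis each piece contributes
`T c j * T j a * π a` times the mean `O` at the state of the observed time. Summing out `c` uses
that the columns of `T` sum to one, and summing out `a` produces `w j = (T π) j`; for `x₁` the
factor `w j` is cancelled by `diag(w)⁻¹`.
-/

open MeasureTheory ProbabilityTheory Matrix

section Integral

variable {Ω ι : Type*} [MeasurableSpace Ω] {μ : Measure Ω}
  [DecidableEq ι] [MeasurableSpace ι] [MeasurableSingletonClass ι]

theorem MeasureTheory.Integrable.ite_eq {Z : Ω → ι} (hZ : Measurable Z) {f : Ω → ℝ}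
    (hf : Integrable f μ) (a : ι) :
    Integrable (fun ω => if Z ω = a then f ω else 0) μ :=
  (hf.indicator (hZ (measurableSet_singleton a))).congr
    (Filter.Eventually.of_forall fun ω => by by_cases h : Z ω = a <;> simp [h])

variable [Fintype ι]

theorem integral_eq_sum_integral_ite {Z : Ω → ι} (hZ : Measurable Z) {f : Ω → ℝ}
    (hf : Integrable f μ) :
    ∫ ω, f ω ∂μ = ∑ a, ∫ ω, (if Z ω = a then f ω else 0) ∂μ := by
  rw [← integral_finsetSum _ fun a _ => hf.ite_eq hZ a]
  exact integral_congr_ae (Filter.Eventually.of_forall fun ω => by simp)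

theorem integral_ite_eq_sum_integral_ite_and {U V W : Ω → ι} (hU : Measurable U)
    (hV : Measurable V) (hW : Measurable W) {f : Ω → ℝ} (hf : Integrable f μ) (j : ι) :
    ∫ ω, (if V ω = j then f ω else 0) ∂μ
      = ∑ a, ∑ c, ∫ ω, (if U ω = a ∧ V ω = j ∧ W ω = c then f ω else 0) ∂μ := by
  rw [integral_eq_sum_integral_ite (hU.prodMk hW) (hf.ite_eq hV j), Fintype.sum_prod_type]
  refine Finset.sum_congr rfl fun a _ => Finset.sum_congr rfl fun c _ => ?_
  refine integral_congr_ae (Filter.Eventually.of_forall fun ω => ?_)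
  by_cases hVj : V ω = j <;> simp [hVj, and_comm]

end Integral

section TwoStepSums

variable {ι R : Type*} [Fintype ι] [CommSemiring R] (T : Matrix ι ι R) (π : ι → R) (j : ι)

theorem sum_sum_transition_mul_left (hj : ∑ i, T i j = 1) (g : ι → R) :
    ∑ a, ∑ c, T c j * T j a * π a * g a = ∑ a, T j a * π a * g a := by
  refine Finset.sum_congr rfl fun a _ => ?_
  rw [← Finset.sum_mul, ← Finset.sum_mul, ← Finset.sum_mul, hj, one_mul]

theorem sum_sum_transition_mul_right (g : ι → R) :
    ∑ a, ∑ c, T c j * T j a * π a * g c = T.mulVec π j * ∑ c, g c * T c j := by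
  rw [Finset.sum_comm]
  simp only [mulVec, dotProduct, Finset.sum_mul, Finset.mul_sum]
  exact Finset.sum_congr rfl fun a _ => Finset.sum_congr rfl fun c _ => by ring

end TwoStepSums

theorem mul_mul_inv_diagonal_apply {m ι K : Type*} [Fintype ι] [DecidableEq ι] [Field K]
    (A : Matrix m ι K) {w : ι → K} (hw : ∀ a, w a ≠ 0) (i : m) (j : ι) :
    w j * (A * (diagonal w)⁻¹) i j = A i j := by
  have hinv : (diagonal w)⁻¹ = diagonal fun a => (w a)⁻¹ := by
    refine inv_eq_right_inv ?_
    rw [diagonal_mul_diagonal]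
    exact diagonal_eq_one.mpr (funext fun a => mul_inv_cancel₀ (hw a))
  rw [hinv, mul_diagonal, mul_left_comm, mul_inv_cancel₀ (hw j), mul_one]

theorem mul_diagonal_mul_transpose_apply {m ι R : Type*} [Fintype ι] [DecidableEq ι]
    [CommSemiring R] (O : Matrix m ι R) (π : ι → R) (T : Matrix ι ι R) (i : m) (j : ι) :
    (O * diagonal π * Tᵀ) i j = ∑ a, T j a * π a * O i a := by
  rw [mul_apply]
  simp only [mul_diagonal, transpose_apply]
  exact Finset.sum_congr rfl fun a _ => by ring

theorem stmt6_general (k d : ℕ)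
    (π : Fin k → ℝ)
    (T : Matrix (Fin k) (Fin k) ℝ) (hT1 : ∀ j, ∑ i, T i j = 1)
    (O : Matrix (Fin d) (Fin k) ℝ)
    {Ω : Type*} [MeasureSpace Ω]
    (y : Fin 3 → Ω → Fin k) (hy : ∀ t, Measurable (y t))
    (x : Fin 3 → Ω → Fin d → ℝ)
    (hint : ∀ t i, Integrable (fun ω => x t ω i) ℙ)
    (hcond : ∀ (a b c : Fin k) (t : Fin 3) (i : Fin d),
      (∫ ω, if y 0 ω = a ∧ y 1 ω = b ∧ y 2 ω = c then x t ω i else 0)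
        = (T c b * T b a * π a) * O i (![a, b, c] t))
    (w : Fin k → ℝ) (hw : w = T.mulVec π) (hwpos : ∀ j, 0 < w j) :
    ∀ (j : Fin k) (i : Fin d),
      ((∫ ω, if y 1 ω = j then x 0 ω i else 0)
        = w j * (O * Matrix.diagonal π * Tᵀ * (Matrix.diagonal w)⁻¹) i j) ∧
      ((∫ ω, if y 1 ω = j then x 1 ω i else 0) = w j * O i j) ∧
      ((∫ ω, if y 1 ω = j then x 2 ω i else 0) = w j * (O * T) i j) := by
  intro j i
  have hsplit : ∀ t, (∫ ω, if y 1 ω = j then x t ω i else 0)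
      = ∑ a, ∑ c, T c j * T j a * π a * O i (![a, j, c] t) := fun t => by
    simp only [integral_ite_eq_sum_integral_ite_and (hy 0) (hy 1) (hy 2) (hint t i) j, hcond]
  refine ⟨?_, ?_, ?_⟩
  · rw [mul_mul_inv_diagonal_apply _ fun a => (hwpos a).ne', mul_diagonal_mul_transpose_apply,
      hsplit 0]
    exact sum_sum_transition_mul_left T π j (hT1 j) (O i)
  · rw [hsplit 1, hw]
    exact (sum_sum_transition_mul_left T π j (hT1 j) fun _ => O i j).trans
      (Finset.sum_mul _ _ _).symm
  · rw [hsplit 2, hw, mul_apply]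
    exact sum_sum_transition_mul_right T π j (O i)

/-- **Hidden Markov model: conditional means of the three observations given `y₂`.**
For an HMM with initial distribution `π`, column-stochastic transition matrix `T`,
observation mean matrix `O` (i.e. `E[x_t | y_t = j] = O e_j`), and `w := Tπ` with positive
entries, the three views satisfy `E[x₁ | y₂=j] = O diag(π) Tᵀ diag(w)⁻¹ e_j`,
`E[x₂ | y₂=j] = O e_j`, `E[x₃ | y₂=j] = O T e_j` (stated with the indicator of `{y₂ = j}`).
(Times `1,2,3` are indexed by `0,1,2 : Fin 3`.) -/
theorem stmt6 (k d : ℕ) (hk : 1 ≤ k)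
    (π : Fin k → ℝ) (hπ0 : ∀ a, 0 ≤ π a) (hπ1 : ∑ a, π a = 1)
    (T : Matrix (Fin k) (Fin k) ℝ) (hT0 : ∀ i j, 0 ≤ T i j) (hT1 : ∀ j, ∑ i, T i j = 1)
    (O : Matrix (Fin d) (Fin k) ℝ)
    {Ω : Type*} [MeasureSpace Ω] [IsProbabilityMeasure (ℙ : Measure Ω)]
    (y : Fin 3 → Ω → Fin k) (hy : ∀ t, Measurable (y t))
    (hjoint : ∀ a b c : Fin k,
      (ℙ : Measure Ω) {ω | y 0 ω = a ∧ y 1 ω = b ∧ y 2 ω = c}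
        = ENNReal.ofReal (T c b * T b a * π a))
    (x : Fin 3 → Ω → Fin d → ℝ)
    (hint : ∀ t i, Integrable (fun ω => x t ω i) ℙ)
    (hcond : ∀ (a b c : Fin k) (t : Fin 3) (i : Fin d),
      (∫ ω, if y 0 ω = a ∧ y 1 ω = b ∧ y 2 ω = c then x t ω i else 0)
        = (T c b * T b a * π a) * O i (![a, b, c] t))
    (w : Fin k → ℝ) (hw : w = T.mulVec π) (hwpos : ∀ j, 0 < w j) :
    ∀ (j : Fin k) (i : Fin d),
      ((∫ ω, if y 1 ω = j then x 0 ω i else 0)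
        = w j * (O * Matrix.diagonal π * Tᵀ * (Matrix.diagonal w)⁻¹) i j) ∧
      ((∫ ω, if y 1 ω = j then x 1 ω i else 0) = w j * O i j) ∧
      ((∫ ω, if y 1 ω = j then x 2 ω i else 0) = w j * (O * T) i j) :=
  stmt6_general k d π T hT1 O y hy x hint hcond w hw hwpos
end

section
/- Let μ_1, …, μ_k ∈ ℝ^d be linearly independent and w_1, …, w_k > 0. Set M₂ := Σ_{i=1}^k w_i μ_i μ_iᵀ and let M₃ be the symmetric trilinear form M₃(x,y,z) := Σ_{i=1}^k w_i ⟨μ_i,x⟩⟨μ_i,y⟩⟨μ_i,z⟩ on ℝ^d. Let W ∈ ℝ^{d×k} satisfy Wᵀ M₂ W = I_k, define μ̃_i := √(w_i)·Wᵀμ_i ∈ ℝ^k, and let M̃₃ be the tensor on ℝ^k given by M̃₃(x,y,z) := M₃(Wx, Wy, Wz). Then: (1) {μ̃_1, …, μ̃_k} is an orthonormal basis of ℝ^k and M̃₃ = Σ_{i=1}^k (1/√w_i)·μ̃_i^⊗3; (2) the set of robust eigenvectors of M̃₃ equals exactly {μ̃_1, …, μ̃_k}, and M̃₃(I, μ̃_i,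 μ̃_i) = (1/√w_i)·μ̃_i, i.e. the eigenvalue of the robust eigenvector μ̃_i equals 1/√w_i; (3) for each i, (1/√w_i)·M₂ W μ̃_i = μ_i; consequently, if (v, λ) is a robust eigenvector/eigenvalue pair of M̃₃, then λ·M₂ W v = μ_i for some i ∈ [k]. -/
/-
In whitened coordinates the vectors `μ̃ i` are the rows of `U = diag(√w) P W`, where `P` has rows
`μ i`. Since `Wᵀ M₂ W = Uᵀ U = 1`, also `U Uᵀ = 1`: the `μ̃ i` form an orthonormal basis, in which
`M̃₃ = ∑ (1/√w_i) μ̃_i^⊗3`. For such an orthogonally decomposable tensor with positive weights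
`λ_i`, one step of power iteration squares every ratio `λ_l ⟨μ̃_l, θ⟩ / (λ_i ⟨μ̃_i, θ⟩)`, so the
iteration converges to `μ̃_i` as soon as the `i`-th weighted coordinate strictly dominates the
others. Near `μ̃_i` it does, so each `μ̃_i` is robust; conversely, pushing a robust `u` slightly
along the basis vector with the largest weighted coordinate creates such a dominance, so `u` is
that basis vector.
-/

open scoped BigOperators
open Matrix

noncomputable section

/-- Euclidean dot product on `ℝ^n`. -/
def dotp {n : ℕ} (u v : Fin n → ℝ) : ℝ := ∑ i, u i * v i

/-- Euclidean norm on `ℝ^n`. -/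
def enorm' {n : ℕ} (u : Fin n → ℝ) : ℝ := Real.sqrt (∑ i, (u i) ^ 2)

/-- The second moment matrix `M₂ = ∑ i, w i • μ i μ iᵀ`. -/
def M2 {d k : ℕ} (w : Fin k → ℝ) (μ : Fin k → Fin d → ℝ) : Matrix (Fin d) (Fin d) ℝ :=
  ∑ i, w i • Matrix.vecMulVec (μ i) (μ i)

/-- The trilinear form `M̃₃(x,y,z) := M₃(Wx, Wy, Wz)` where
`M₃(u₁,u₂,u₃) = ∑ i, w i ⟨μ i, u₁⟩⟨μ i, u₂⟩⟨μ i, u₃⟩`. -/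
def M3til {d k : ℕ} (w : Fin k → ℝ) (μ : Fin k → Fin d → ℝ)
    (W : Matrix (Fin d) (Fin k) ℝ) (x y z : Fin k → ℝ) : ℝ :=
  ∑ i, w i * dotp (μ i) (W.mulVec x) * dotp (μ i) (W.mulVec y) * dotp (μ i) (W.mulVec z)

/-- `M̃₃(I,u,u)`, the power iteration map of the whitened tensor. -/
def tmap3 {d k : ℕ} (w : Fin k → ℝ) (μ : Fin k → Fin d → ℝ)
    (W : Matrix (Fin d) (Fin k) ℝ) (u : Fin k → ℝ) : Fin k → ℝ :=
  fun j => M3til w μ W (Pi.single j 1) u u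

/-- The power iteration sequence of a general map `Tm = T(I,·,·)`, started at `θ`. -/
def powSeqG {k : ℕ} (Tm : (Fin k → ℝ) → Fin k → ℝ) (θ : Fin k → ℝ) : ℕ → Fin k → ℝ
  | 0 => θ
  | t + 1 => (enorm' (Tm (powSeqG Tm θ t)))⁻¹ • Tm (powSeqG Tm θ t)

/-- A unit vector `u` is a robust eigenvector of the tensor with power map `Tm` if all
power iteration sequences started in some ball around `u` are well defined and converge
to `u`. -/
def RobustEigG {k : ℕ} (Tm : (Fin k → ℝ) → Fin k → ℝ) (u : Fin k → ℝ) : Prop :=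
  enorm' u = 1 ∧ ∃ ε > (0 : ℝ), ∀ θ : Fin k → ℝ, enorm' (θ - u) ≤ ε →
    (∀ t, Tm (powSeqG Tm θ t) ≠ 0) ∧
    Filter.Tendsto (powSeqG Tm θ) Filter.atTop (nhds u)

/-- The whitened vectors `μ̃ i := √(w i) • Wᵀ μ i`. -/
def mutil {d k : ℕ} (w : Fin k → ℝ) (μ : Fin k → Fin d → ℝ)
    (W : Matrix (Fin d) (Fin k) ℝ) (i : Fin k) : Fin k → ℝ :=
  Real.sqrt (w i) • (Wᵀ.mulVec (μ i))

open Filter Topology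
open scoped RealInnerProductSpace

lemma exists_abs_add_mul_eq (c : ℝ) {ε : ℝ} (hε : 0 ≤ ε) :
    ∃ s : ℝ, |s| = 1 ∧ |c + ε * s| = |c| + ε := by
  rcases le_total 0 c with hc | hc
  · exact ⟨1, abs_one, by rw [mul_one, abs_of_nonneg hc, abs_of_nonneg (by linarith)]⟩
  · exact ⟨-1, by simp, by rw [abs_of_nonpos hc, abs_of_nonpos (by linarith)]; ring⟩

lemma exists_pos_mul_add_lt {ι : Type*} [Fintype ι] {a : ι → ℝ} (ha : ∀ i, 0 < a i) (i : ι) :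
    ∃ ε > 0, ∀ j, ε * (a i + a j) < a i := by
  set A := ∑ l, a l
  have hA (l : ι) : a l ≤ A := Finset.single_le_sum (fun l _ => (ha l).le) (Finset.mem_univ l)
  have hai := ha i
  have hpos : 0 < a i + A := by linarith [hA i]
  refine ⟨a i / (2 * (a i + A)), by positivity, fun j => ?_⟩
  calc a i / (2 * (a i + A)) * (a i + a j) ≤ a i / (2 * (a i + A)) * (a i + A) := by
        gcongr; exact hA j
    _ = a i / 2 := by field_simp
    _ < a i := by linarith

section PowerIteration

variable {E : Type*} [NormedAddCommGroup E] [NormedSpace ℝ E]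

def powerIter (T : E → E) (θ : E) : ℕ → E
  | 0 => θ
  | t + 1 => NormedSpace.normalize (T (powerIter T θ t))

def IsRobustEigenvector (T : E → E) (u : E) : Prop :=
  ‖u‖ = 1 ∧ ∃ ε > (0 : ℝ), ∀ θ, ‖θ - u‖ ≤ ε →
    (∀ t, T (powerIter T θ t) ≠ 0) ∧ Tendsto (powerIter T θ) atTop (𝓝 u)

lemma continuousAt_normalize {x : E} (hx : x ≠ 0) :
    ContinuousAt (NormedSpace.normalize (V := E)) x :=
  (continuous_norm.continuousAt.inv₀ (norm_ne_zero_iff.2 hx)).smul continuousAt_id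

end PowerIteration

section OrthogonallyDecomposable

variable {E ι : Type*} [NormedAddCommGroup E] [InnerProductSpace ℝ E] [Fintype ι]
  (b : OrthonormalBasis ι ℝ E) (lam : ι → ℝ) {T : E → E}

def dominanceRatio (i l : ι) (x : E) : ℝ := lam l * ⟪b l, x⟫ / (lam i * ⟪b i, x⟫)

lemma abs_inner_sub_inner_le (l : ι) (x y : E) : |⟪b l, x⟫ - ⟪b l, y⟫| ≤ ‖x - y‖ := by
  rw [← inner_sub_right]
  simpa [b.orthonormal.1 l] using abs_real_inner_le_norm (b l) (x - y)

-- `hT` says that `T x = M(I, x, x)` for the tensor `M = ∑ l, lam l • (b l)^⊗3`.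
variable {b lam} (hlam : ∀ i, 0 < lam i) (hT : ∀ x l, ⟪b l, T x⟫ = lam l * ⟪b l, x⟫ ^ 2)
include hT

lemma apply_eq_sum (x : E) : T x = ∑ l, (lam l * ⟪b l, x⟫ ^ 2) • b l := by
  simp_rw [← hT]
  exact (b.sum_repr' _).symm

lemma apply_basis (i : ι) : T (b i) = lam i • b i := by
  classical
  simp [apply_eq_sum hT, b.inner_eq_ite, ite_pow]

include hlam in
lemma apply_ne_zero {x : E} {l : ι} (hx : ⟪b l, x⟫ ≠ 0) : T x ≠ 0 := by
  intro h
  have := hT x l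
  rw [h, inner_zero_right] at this
  exact mul_ne_zero (hlam l).ne' (pow_ne_zero 2 hx) this.symm

lemma inner_powerIter_succ (θ : E) (t : ℕ) (l : ι) :
    ⟪b l, powerIter T θ (t + 1)⟫
      = ‖T (powerIter T θ t)‖⁻¹ * (lam l * ⟪b l, powerIter T θ t⟫ ^ 2) := by
  rw [powerIter, NormedSpace.normalize, inner_smul_right, hT]

include hlam in
lemma inner_powerIter_ne_zero {θ : E} {i : ι} (hi : ⟪b i, θ⟫ ≠ 0) (t : ℕ) :
    ⟪b i, powerIter T θ t⟫ ≠ 0 := by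
  induction t with
  | zero => exact hi
  | succ t ih =>
    rw [inner_powerIter_succ hT]
    exact mul_ne_zero (inv_ne_zero (norm_ne_zero_iff.2 (apply_ne_zero hlam hT ih)))
      (mul_ne_zero (hlam i).ne' (pow_ne_zero 2 ih))

include hlam in
lemma dominanceRatio_powerIter {θ : E} {i : ι} (hi : ⟪b i, θ⟫ ≠ 0) (l : ι) (t : ℕ) :
    dominanceRatio b lam i l (powerIter T θ t) = dominanceRatio b lam i l θ ^ 2 ^ t := by
  induction t with
  | zero => simp [powerIter]
  | succ t ih =>
    have hc := inner_powerIter_ne_zero hlam hT hi t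
    have hn := norm_ne_zero_iff.2 (apply_ne_zero hlam hT hc)
    have := (hlam i).ne'
    rw [pow_succ, pow_mul, ← ih, dominanceRatio, dominanceRatio, inner_powerIter_succ hT,
      inner_powerIter_succ hT]
    field_simp

include hlam in
lemma smul_apply_eq_sum_dominanceRatio {x : E} {i : ι} (hi : ⟪b i, x⟫ ≠ 0) :
    (lam i * ⟪b i, x⟫ ^ 2)⁻¹ • T x
      = ∑ l, (lam i / lam l * dominanceRatio b lam i l x ^ 2) • b l := by
  rw [apply_eq_sum hT, Finset.smul_sum]
  refine Finset.sum_congr rfl fun l _ => ?_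
  rw [smul_smul, dominanceRatio]
  congr 1
  have := (hlam i).ne'
  have := (hlam l).ne'
  field_simp

include hlam in
theorem tendsto_powerIter_of_dominant {θ : E} {i : ι} (hi : ⟪b i, θ⟫ ≠ 0)
    (hdom : ∀ j ≠ i, |dominanceRatio b lam i j θ| < 1) :
    (∀ t, T (powerIter T θ t) ≠ 0) ∧ Tendsto (powerIter T θ) atTop (𝓝 (b i)) := by
  classical
  have hc := inner_powerIter_ne_zero hlam hT hi
  refine ⟨fun t => apply_ne_zero hlam hT (hc t), ?_⟩
  have hratio (l : ι) : Tendsto (fun t => dominanceRatio b lam i l (powerIter T θ t)) atTop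
      (𝓝 (if l = i then 1 else 0)) := by
    split_ifs with hl
    · subst hl
      exact tendsto_const_nhds.congr fun t => (div_self (mul_ne_zero (hlam l).ne' (hc t))).symm
    · simp_rw [dominanceRatio_powerIter hlam hT hi]
      exact (tendsto_pow_atTop_nhds_zero_of_abs_lt_one (hdom l hl)).comp
        (tendsto_atTop_mono (fun t => Nat.lt_two_pow_self.le) tendsto_id)
  set y : ℕ → E := fun t =>
    ∑ l, (lam i / lam l * dominanceRatio b lam i l (powerIter T θ t) ^ 2) • b l
  have hy : Tendsto y atTop (𝓝 (b i)) := by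
    have := tendsto_finsetSum Finset.univ fun l _ =>
      (((hratio l).pow 2).const_mul (lam i / lam l)).smul_const (b l)
    simpa [ite_pow, (hlam i).ne'] using this
  -- `y t` is a positive multiple of `T θ_t`, so it has the same normalization `θ_{t+1}`.
  have hstep (t : ℕ) : powerIter T θ (t + 1) = NormedSpace.normalize (y t) := by
    simp only [y]
    rw [← smul_apply_eq_sum_dominanceRatio hlam hT (hc t), NormedSpace.normalize_smul_of_pos
      (inv_pos.2 (mul_pos (hlam i) (sq_pos_of_ne_zero (hc t)))), powerIter]
  rw [← tendsto_add_atTop_iff_nat 1, funext hstep,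
    ← NormedSpace.normalize_eq_self_of_norm_eq_one (b.orthonormal.1 i)]
  exact (continuousAt_normalize (b.orthonormal.ne_zero i)).tendsto.comp hy

include hlam in
theorem isRobustEigenvector_basis (i : ι) : IsRobustEigenvector T (b i) := by
  classical
  obtain ⟨ε, hε, hmargin⟩ := exists_pos_mul_add_lt hlam i
  refine ⟨b.orthonormal.1 i, ε, hε, fun θ hθ => ?_⟩
  have hclose (l : ι) := abs_le.1 ((abs_inner_sub_inner_le b l θ (b i)).trans hθ)
  have hci : 1 - ε ≤ ⟪b i, θ⟫ := by simpa [b.inner_eq_ite] using (hclose i).1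
  have hci_pos : 0 < ⟪b i, θ⟫ := by nlinarith [hmargin i, hlam i]
  refine tendsto_powerIter_of_dominant hlam hT hci_pos.ne' fun j hj => ?_
  have hcj : |⟪b j, θ⟫| ≤ ε := by simpa [b.inner_eq_ite, hj, abs_le] using hclose j
  rw [dominanceRatio, abs_div, abs_mul, abs_mul, abs_of_pos (hlam j), abs_of_pos (hlam i),
    abs_of_pos hci_pos, div_lt_one (mul_pos (hlam i) hci_pos)]
  nlinarith [hmargin j, hlam i, hlam j]

include hlam in
theorem exists_eq_of_isRobustEigenvector {u : E} (hu : IsRobustEigenvector T u) :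
    ∃ i, b i = u := by
  classical
  obtain ⟨hu1, ε, hε, hconv⟩ := hu
  have hne : (Finset.univ : Finset ι).Nonempty := by
    by_contra h
    have := b.sum_repr' u
    rw [Finset.not_nonempty_iff_eq_empty.1 h, Finset.sum_empty] at this
    simp [← this] at hu1
  obtain ⟨i, -, hmax⟩ := Finset.exists_max_image Finset.univ (fun l => lam l * |⟪b l, u⟫|) hne
  obtain ⟨s, hs, hsum⟩ := exists_abs_add_mul_eq ⟪b i, u⟫ hε.le
  set θ := u + (ε * s) • b i
  have hθ : ‖θ - u‖ ≤ ε := by simp [θ, norm_smul, hs, abs_of_pos hε, b.orthonormal.1 i]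
  have hinner (l : ι) : ⟪b l, θ⟫ = ⟪b l, u⟫ + ε * s * (if l = i then 1 else 0) := by
    simp [θ, inner_add_right, inner_smul_right, b.inner_eq_ite]
  have hci : 0 < |⟪b i, θ⟫| := by
    rw [hinner, if_pos rfl, mul_one, hsum]
    positivity
  have hdom (j : ι) (hj : j ≠ i) : |dominanceRatio b lam i j θ| < 1 := by
    rw [dominanceRatio, abs_div, abs_mul, abs_mul, abs_of_pos (hlam j), abs_of_pos (hlam i),
      div_lt_one (mul_pos (hlam i) hci), hinner, hinner, if_neg hj, if_pos rfl, mul_one,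
      mul_zero, add_zero, hsum]
    nlinarith [hmax j (Finset.mem_univ j), hlam i]
  exact ⟨i, tendsto_nhds_unique
    (tendsto_powerIter_of_dominant hlam hT (abs_pos.1 hci) hdom).2 (hconv θ hθ).2⟩

include hlam in
theorem isRobustEigenvector_iff {u : E} : IsRobustEigenvector T u ↔ u ∈ Set.range b := by
  refine ⟨exists_eq_of_isRobustEigenvector hlam hT, ?_⟩
  rintro ⟨i, rfl⟩
  exact isRobustEigenvector_basis hlam hT i

end OrthogonallyDecomposable

section EuclideanTransport

variable {n : ℕ}

lemma dotp_eq_dotProduct (u v : Fin n → ℝ) : dotp u v = u ⬝ᵥ v := rfl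

lemma dotp_eq_inner (u v : Fin n → ℝ) :
    dotp u v = ⟪(WithLp.toLp 2 u : EuclideanSpace ℝ (Fin n)), WithLp.toLp 2 v⟫ := by
  simp [dotp, PiLp.inner_apply, mul_comm]

lemma enorm'_eq_norm (u : Fin n → ℝ) :
    enorm' u = ‖(WithLp.toLp 2 u : EuclideanSpace ℝ (Fin n))‖ := by
  simp [enorm', EuclideanSpace.norm_eq]

def euclideanMap (Tm : (Fin n → ℝ) → Fin n → ℝ) (x : EuclideanSpace ℝ (Fin n)) :
    EuclideanSpace ℝ (Fin n) :=
  WithLp.toLp 2 (Tm x.ofLp)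

lemma powSeqG_eq_powerIter (Tm : (Fin n → ℝ) → Fin n → ℝ) (θ : Fin n → ℝ) :
    powSeqG Tm θ = fun t => (powerIter (euclideanMap Tm) (WithLp.toLp 2 θ) t).ofLp := by
  funext t
  induction t with
  | zero => rfl
  | succ t ih =>
    simp [powSeqG, powerIter, NormedSpace.normalize, euclideanMap, ih, enorm'_eq_norm]

lemma robustEigG_iff (Tm : (Fin n → ℝ) → Fin n → ℝ) (u : Fin n → ℝ) :
    RobustEigG Tm u ↔ IsRobustEigenvector (euclideanMap Tm) (WithLp.toLp 2 u) := by
  simp only [RobustEigG, IsRobustEigenvector, enorm'_eq_norm, powSeqG_eq_powerIter,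
    (PiLp.homeomorph 2 _).isInducing.tendsto_nhds_iff, euclideanMap, ne_eq,
    WithLp.toLp_eq_zero, WithLp.toLp_sub]
  exact and_congr_right' <| exists_congr fun ε => and_congr_right' <|
    (WithLp.equiv 2 (Fin n → ℝ)).symm.forall_congr_left

end EuclideanTransport

section Whitening

variable {d k : ℕ} (w : Fin k → ℝ) (μ : Fin k → Fin d → ℝ) (W : Matrix (Fin d) (Fin k) ℝ)

lemma M2_eq_transpose_mul_diagonal_mul : M2 w μ = (of μ)ᵀ * diagonal w * of μ := by
  ext x y
  simp [M2, Matrix.sum_apply, vecMulVec_apply, mul_apply, diagonal, mul_comm, mul_left_comm]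

lemma M2_mulVec (v : Fin d → ℝ) : M2 w μ *ᵥ v = ∑ j, (w j * dotp (μ j) v) • μ j := by
  simp [M2, sum_mulVec, smul_mulVec, vecMulVec_mulVec, dotp_eq_dotProduct, smul_smul]

lemma of_mutil : of (mutil w μ W) = diagonal (fun i => √(w i)) * of μ * W := by
  ext i a
  rw [mul_apply]
  simp only [diagonal_mul, mutil, mulVec, dotProduct, transpose_apply, Finset.mul_sum,
    of_apply, Pi.smul_apply, smul_eq_mul]
  exact Finset.sum_congr rfl fun x _ => by ring

variable {w} (hw : ∀ i, 0 < w i)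
include hw

lemma dotp_mulVec (i : Fin k) (x : Fin k → ℝ) :
    dotp (μ i) (W *ᵥ x) = (√(w i))⁻¹ * dotp (mutil w μ W i) x := by
  rw [dotp_eq_dotProduct, dotp_eq_dotProduct, mutil, smul_dotProduct, mulVec_transpose,
    dotProduct_mulVec, smul_eq_mul, inv_mul_cancel_left₀ (Real.sqrt_pos.2 (hw i)).ne']

lemma M3til_eq (x y z : Fin k → ℝ) :
    M3til w μ W x y z = ∑ i, (1 / √(w i)) * (dotp (mutil w μ W i) x
      * (dotp (mutil w μ W i) y * dotp (mutil w μ W i) z)) := by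
  refine Finset.sum_congr rfl fun i _ => ?_
  have hs := Real.sqrt_pos.2 (hw i)
  rw [dotp_mulVec μ W hw, dotp_mulVec μ W hw, dotp_mulVec μ W hw]
  field_simp
  rw [Real.sq_sqrt (hw i).le]

lemma tmap3_eq (u : Fin k → ℝ) :
    tmap3 w μ W u = ∑ i, (1 / √(w i) * dotp (mutil w μ W i) u ^ 2) • mutil w μ W i := by
  classical
  ext j
  simp only [tmap3, M3til_eq μ W hw, Finset.sum_apply, Pi.smul_apply, smul_eq_mul]
  refine Finset.sum_congr rfl fun i _ => ?_
  rw [dotp_eq_dotProduct, dotProduct_single_one]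
  ring

variable (hW : Wᵀ * M2 w μ * W = 1)
include hW

lemma dotp_mutil_mutil (i j : Fin k) :
    dotp (mutil w μ W i) (mutil w μ W j) = if i = j then 1 else 0 := by
  have hU : (of (mutil w μ W))ᵀ * of (mutil w μ W) = 1 := by
    rw [of_mutil, ← hW, M2_eq_transpose_mul_diagonal_mul]
    simp only [transpose_mul, diagonal_transpose, Matrix.mul_assoc]
    rw [← Matrix.mul_assoc (diagonal _) (diagonal _), diagonal_mul_diagonal]
    simp [Real.mul_self_sqrt (hw _).le]
  simpa [mul_apply, one_apply, dotp] using Matrix.ext_iff.2 (mul_eq_one_comm.1 hU) i j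

lemma dotp_mutil_tmap3 (u : Fin k → ℝ) (l : Fin k) :
    dotp (mutil w μ W l) (tmap3 w μ W u) = 1 / √(w l) * dotp (mutil w μ W l) u ^ 2 := by
  simp_rw [tmap3_eq μ W hw, dotp_eq_dotProduct, dotProduct_sum, dotProduct_smul,
    ← dotp_eq_dotProduct, dotp_mutil_mutil μ W hw hW]
  simp

lemma orthonormal_mutil :
    Orthonormal ℝ fun i => (WithLp.toLp 2 (mutil w μ W i) : EuclideanSpace ℝ (Fin k)) := by
  classical
  rw [orthonormal_iff_ite]
  intro i j
  rw [← dotp_eq_inner, dotp_mutil_mutil μ W hw hW]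

lemma span_mutil : Submodule.span ℝ (Set.range (mutil w μ W)) = ⊤ :=
  ((orthonormal_mutil μ W hw hW).linearIndependent.map'
    (WithLp.linearEquiv 2 ℝ (Fin k → ℝ)).toLinearMap
    (LinearEquiv.ker _)).span_eq_top_of_card_eq_finrank' (by simp)

def whitenedBasis : OrthonormalBasis (Fin k) ℝ (EuclideanSpace ℝ (Fin k)) :=
  OrthonormalBasis.mk (orthonormal_mutil μ W hw hW)
    ((orthonormal_mutil μ W hw hW).linearIndependent.span_eq_top_of_card_eq_finrank'
      (by simp)).ge

lemma whitenedBasis_apply (i : Fin k) :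
    whitenedBasis μ W hw hW i = WithLp.toLp 2 (mutil w μ W i) :=
  congrFun (OrthonormalBasis.coe_mk _ _) i

lemma smul_M2_mul_mulVec_mutil (i : Fin k) :
    (1 / √(w i)) • (M2 w μ * W) *ᵥ mutil w μ W i = μ i := by
  have hs := Real.sqrt_pos.2 (hw i)
  simp_rw [← mulVec_mulVec, M2_mulVec, dotp_mulVec μ W hw, dotp_mutil_mutil μ W hw hW]
  simp only [mul_ite, mul_one, mul_zero, ite_smul, zero_smul, Finset.sum_ite_eq',
    Finset.mem_univ, if_true, smul_smul]
  convert one_smul ℝ (μ i)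
  field_simp
  rw [Real.sq_sqrt (hw i).le]

end Whitening

theorem stmt9_general {d k : ℕ} (w : Fin k → ℝ) (hw : ∀ i, 0 < w i)
    (μ : Fin k → Fin d → ℝ)
    (W : Matrix (Fin d) (Fin k) ℝ)
    (hW : Wᵀ * M2 w μ * W = 1) :
    ((∀ i j, dotp (mutil w μ W i) (mutil w μ W j) = if i = j then 1 else 0) ∧
      Submodule.span ℝ (Set.range (mutil w μ W)) = ⊤ ∧
      (∀ x y z : Fin k → ℝ,
        M3til w μ W x y z
          = ∑ i, (1 / Real.sqrt (w i)) * (dotp (mutil w μ W i) x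
              * (dotp (mutil w μ W i) y * dotp (mutil w μ W i) z)))) ∧
    ({u : Fin k → ℝ | RobustEigG (tmap3 w μ W) u} = Set.range (mutil w μ W) ∧
      ∀ i, tmap3 w μ W (mutil w μ W i) = (1 / Real.sqrt (w i)) • mutil w μ W i) ∧
    ((∀ i, (1 / Real.sqrt (w i)) • (M2 w μ * W).mulVec (mutil w μ W i) = μ i) ∧
      ∀ (u : Fin k → ℝ) (lam0 : ℝ),
        RobustEigG (tmap3 w μ W) u → tmap3 w μ W u = lam0 • u →
        ∃ i, lam0 • (M2 w μ * W).mulVec u = μ i) := by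
  set b := whitenedBasis μ W hw hW
  have hlam (i : Fin k) : 0 < 1 / √(w i) := by have := Real.sqrt_pos.2 (hw i); positivity
  have hT (x : EuclideanSpace ℝ (Fin k)) (l : Fin k) :
      ⟪b l, euclideanMap (tmap3 w μ W) x⟫ = 1 / √(w l) * ⟪b l, x⟫ ^ 2 := by
    simpa [b, whitenedBasis_apply, euclideanMap, dotp_eq_inner] using
      dotp_mutil_tmap3 μ W hw hW x.ofLp l
  have heig (i : Fin k) : tmap3 w μ W (mutil w μ W i) = (1 / √(w i)) • mutil w μ W i := by
    simpa [b, whitenedBasis_apply, euclideanMap] using congrArg WithLp.ofLp (apply_basis hT i)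
  have hrobust (u : Fin k → ℝ) :
      RobustEigG (tmap3 w μ W) u ↔ u ∈ Set.range (mutil w μ W) := by
    simp [robustEigG_iff, isRobustEigenvector_iff hlam hT, b, whitenedBasis_apply]
  refine ⟨⟨dotp_mutil_mutil μ W hw hW, span_mutil μ W hw hW, M3til_eq μ W hw⟩,
    ⟨Set.ext hrobust, heig⟩, smul_M2_mul_mulVec_mutil μ W hw hW, fun u lam0 hu hlam0 => ?_⟩
  obtain ⟨i, rfl⟩ := (hrobust u).1 hu
  have hne : mutil w μ W i ≠ 0 := fun h => (orthonormal_mutil μ W hw hW).ne_zero i (by simp [h])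
  obtain rfl : lam0 = 1 / √(w i) := smul_left_injective ℝ hne (hlam0.symm.trans (heig i))
  exact ⟨i, smul_M2_mul_mulVec_mutil μ W hw hW i⟩

/-- **Reduction of moment tensors to an orthogonally decomposable tensor.**
With `M₂ = ∑ w_i μ_i μ_iᵀ`, whitening matrix `W` (`Wᵀ M₂ W = I`), `μ̃_i := √w_i Wᵀμ_i` and
`M̃₃(x,y,z) := M₃(Wx, Wy, Wz)`: (1) the `μ̃_i` form an orthonormal basis of `ℝ^k` and
`M̃₃ = ∑ (1/√w_i) μ̃_i^⊗3`; (2) the robust eigenvectors of `M̃₃` are exactly the `μ̃_i`,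
with eigenvalues `1/√w_i`; (3) `(1/√w_i) • M₂ W μ̃_i = μ_i`, so every robust
eigenvector/eigenvalue pair `(v, λ)` of `M̃₃` satisfies `λ • M₂ W v = μ_i` for some `i`
(here `B = M₂ W` is the Moore–Penrose pseudoinverse of `Wᵀ`). -/
theorem stmt9 {d k : ℕ} (w : Fin k → ℝ) (hw : ∀ i, 0 < w i)
    (μ : Fin k → Fin d → ℝ) (hli : LinearIndependent ℝ μ)
    (W : Matrix (Fin d) (Fin k) ℝ)
    (hW : Wᵀ * M2 w μ * W = 1) :
    ((∀ i j, dotp (mutil w μ W i) (mutil w μ W j) = if i = j then 1 else 0) ∧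
      Submodule.span ℝ (Set.range (mutil w μ W)) = ⊤ ∧
      (∀ x y z : Fin k → ℝ,
        M3til w μ W x y z
          = ∑ i, (1 / Real.sqrt (w i)) * (dotp (mutil w μ W i) x
              * (dotp (mutil w μ W i) y * dotp (mutil w μ W i) z)))) ∧
    ({u : Fin k → ℝ | RobustEigG (tmap3 w μ W) u} = Set.range (mutil w μ W) ∧
      ∀ i, tmap3 w μ W (mutil w μ W i) = (1 / Real.sqrt (w i)) • mutil w μ W i) ∧
    ((∀ i, (1 / Real.sqrt (w i)) • (M2 w μ * W).mulVec (mutil w μ W i) = μ i) ∧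
      ∀ (u : Fin k → ℝ) (lam0 : ℝ),
        RobustEigG (tmap3 w μ W) u → tmap3 w μ W u = lam0 • u →
        ∃ i, lam0 • (M2 w μ * W).mulVec u = μ i) :=
  stmt9_general w hw μ W hW
end
end
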